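/- arXiv:2103.15965 — 4 statements merged into one kernel-verified Lean document; each statement's English description precedes it below -/
import Mathlib

section
/- Let d ∈ ℕ and let the cut structure of the balanced-tree flow graph be as defined. For any subset S of vertices with s ∈ S and t ∉ S, if S contains a root-to-leaf path {s, 1, n_1, …, n_{d}} with n_d a leaf, and all capacities are 0/1 with (s,1)-capacity 1 and exactly one capacity-1 outgoing arc per internal node along that path, then the cut capacity of S is at least the capacity of the cut whose source set is exactly {s}∪{path nodes}; i.e., among cuts whose source set contains the capacity-1 path, the path-only source set gives a cut of minimal capacity. -/
/-- Follow the unique capacity-1 outgoing child arc at a node. -/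
def nextNode (capChild : ℕ → ℕ → ℕ) (n : ℕ) : ℕ :=
  if capChild n (2 * n) = 1 then 2 * n else 2 * n + 1

/-- Capacity of the cut whose source set is `{s} ∪ A` in the flow graph of a balanced
decision tree of depth `d`, the source arc `(s,1)` having capacity 1. -/
def cutCap (d : ℕ) (capChild : ℕ → ℕ → ℕ) (capSink : ℕ → ℕ) (A : Finset ℕ) : ℕ :=
  (if 1 ∈ A then 0 else 1) +
  (∑ n ∈ Finset.Icc 1 (2 ^ d - 1),
    if n ∈ A then
      (if 2 * n ∈ A then 0 else capChild n (2 * n)) +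
      (if 2 * n + 1 ∈ A then 0 else capChild n (2 * n + 1))
    else 0) +
  (∑ n ∈ Finset.Icc (2 ^ d) (2 ^ (d + 1) - 1), if n ∈ A then capSink n else 0)

lemma nextNode_bounds (capChild : ℕ → ℕ → ℕ) :
    ∀ k, 2 ^ k ≤ (nextNode capChild)^[k] 1 ∧ (nextNode capChild)^[k] 1 ≤ 2 ^ (k + 1) - 1 := by
  intro k
  induction k with
  | zero => simp
  | succ k ih =>
    obtain ⟨h1, h2⟩ := ih
    rw [Function.iterate_succ_apply']
    have e1 : (2:ℕ) ^ (k + 1) = 2 * 2 ^ k := by ring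
    have e2 : (2:ℕ) ^ (k + 2) = 2 * 2 ^ (k + 1) := by ring
    have hp : (1:ℕ) ≤ 2 ^ k := Nat.one_le_two_pow
    by_cases h : capChild ((nextNode capChild)^[k] 1) (2 * (nextNode capChild)^[k] 1) = 1
    · rw [nextNode, if_pos h]; omega
    · rw [nextNode, if_neg h]; omega

/-- With 0/1 capacities, `(s,1)`-capacity 1, and exactly one capacity-1 outgoing arc at
each internal node along the capacity-1 root-to-leaf path, any source set containing
that path has cut capacity at least that of the source set consisting of exactly the
path nodes (together with `s`). -/
theorem path_source_set_minimal (d : ℕ) (capChild : ℕ → ℕ → ℕ) (capSink : ℕ → ℕ)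
    (hcc : ∀ n m, capChild n m ≤ 1) (hcs : ∀ n, capSink n ≤ 1)
    (hpath : ∀ k < d,
      (capChild ((nextNode capChild)^[k] 1) (2 * ((nextNode capChild)^[k] 1)) = 1 ∧
        capChild ((nextNode capChild)^[k] 1) (2 * ((nextNode capChild)^[k] 1) + 1) = 0) ∨
      (capChild ((nextNode capChild)^[k] 1) (2 * ((nextNode capChild)^[k] 1)) = 0 ∧
        capChild ((nextNode capChild)^[k] 1) (2 * ((nextNode capChild)^[k] 1) + 1) = 1)) :
    ∀ A : Finset ℕ,
      ((Finset.range (d + 1)).image fun k => (nextNode capChild)^[k] 1) ⊆ A →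
      cutCap d capChild capSink
          ((Finset.range (d + 1)).image fun k => (nextNode capChild)^[k] 1) ≤
        cutCap d capChild capSink A := by
  intro A hA
  set P : Finset ℕ := (Finset.range (d + 1)).image (fun k => (nextNode capChild)^[k] 1)
    with hP
  have hmemP : ∀ k ≤ d, (nextNode capChild)^[k] 1 ∈ P := by
    intro k hk
    exact Finset.mem_image.mpr ⟨k, Finset.mem_range.mpr (by omega), rfl⟩
  have hbounds := nextNode_bounds capChild
  have hmono : ∀ k, k < d → (2:ℕ) ^ (k + 1) ≤ 2 ^ d := fun k hk =>
    Nat.pow_le_pow_right (by norm_num) (by omega)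
  -- cutCap of P equals capSink ((nextNode capChild)^[d] 1)
  have hPval : cutCap d capChild capSink P = capSink ((nextNode capChild)^[d] 1) := by
    unfold cutCap
    have h1 : (1:ℕ) ∈ P := by
      have := hmemP 0 (Nat.zero_le d); simpa using this
    rw [if_pos h1]
    have hmid : (∑ n ∈ Finset.Icc 1 (2 ^ d - 1),
        if n ∈ P then
          (if 2 * n ∈ P then 0 else capChild n (2 * n)) +
          (if 2 * n + 1 ∈ P then 0 else capChild n (2 * n + 1))
        else 0) = 0 := by
      apply Finset.sum_eq_zero
      intro n hn
      rw [Finset.mem_Icc] at hn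
      by_cases hnP : n ∈ P
      · rw [if_pos hnP]
        obtain ⟨k, hk, hkeq⟩ := Finset.mem_image.mp hnP
        rw [Finset.mem_range] at hk
        subst hkeq
        have hkd : k < d := by
          by_contra hc
          have hkd' : k = d := by omega
          subst hkd'
          have h1 := (hbounds k).1
          have h2 := hmono
          have hp : (1:ℕ) ≤ 2 ^ k := Nat.one_le_two_pow
          omega
        rcases hpath k hkd with ⟨hl, hr⟩ | ⟨hl, hr⟩
        · have hnext : (nextNode capChild)^[k + 1] 1 = 2 * ((nextNode capChild)^[k] 1) := by
            rw [Function.iterate_succ_apply', nextNode, if_pos hl]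
          have h2n : 2 * ((nextNode capChild)^[k] 1) ∈ P := hnext ▸ hmemP (k + 1) (by omega)
          rw [if_pos h2n, hr]
          by_cases h : 2 * ((nextNode capChild)^[k] 1) + 1 ∈ P <;> simp [h]
        · have hnext : (nextNode capChild)^[k + 1] 1 = 2 * ((nextNode capChild)^[k] 1) + 1 := by
            rw [Function.iterate_succ_apply', nextNode, if_neg (by omega)]
          have h2n : 2 * ((nextNode capChild)^[k] 1) + 1 ∈ P := hnext ▸ hmemP (k + 1) (by omega)
          rw [if_pos h2n, hl]
          by_cases h : 2 * ((nextNode capChild)^[k] 1) ∈ P <;> simp [h]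
      · rw [if_neg hnP]
    rw [hmid]
    have hlast : (∑ n ∈ Finset.Icc (2 ^ d) (2 ^ (d + 1) - 1),
        if n ∈ P then capSink n else 0) = capSink ((nextNode capChild)^[d] 1) := by
      have hdmem : (nextNode capChild)^[d] 1 ∈ Finset.Icc (2 ^ d) (2 ^ (d + 1) - 1) := by
        rw [Finset.mem_Icc]; exact hbounds d
      rw [Finset.sum_eq_single_of_mem _ hdmem]
      · rw [if_pos (hmemP d le_rfl)]
      · intro n hn hne
        rw [Finset.mem_Icc] at hn
        rw [if_neg]
        intro hnP
        obtain ⟨k, hk, hkeq⟩ := Finset.mem_image.mp hnP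
        rw [Finset.mem_range] at hk
        have hkd : k = d := by
          by_contra hc
          have hkd' : k < d := by omega
          have hkeq' : (nextNode capChild)^[k] 1 = n := hkeq
          have h2 := (hbounds k).2
          have h3 := hmono k hkd'
          rw [hkeq'] at h2
          have hp : (1:ℕ) ≤ 2 ^ (k+1) := Nat.one_le_two_pow
          omega
        exact hne (hkd ▸ hkeq.symm)
    rw [hlast]
    omega
  rw [hPval]
  -- cutCap of A is at least capSink ((nextNode capChild)^[d] 1)
  unfold cutCap
  have hdA : (nextNode capChild)^[d] 1 ∈ A := hA (hmemP d le_rfl)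
  have hdmem : (nextNode capChild)^[d] 1 ∈ Finset.Icc (2 ^ d) (2 ^ (d + 1) - 1) := by
    rw [Finset.mem_Icc]; exact hbounds d
  have hle : capSink ((nextNode capChild)^[d] 1) ≤
      ∑ n ∈ Finset.Icc (2 ^ d) (2 ^ (d + 1) - 1), if n ∈ A then capSink n else 0 := by
    have := Finset.single_le_sum (f := fun n => if n ∈ A then capSink n else 0)
      (fun n _ => Nat.zero_le _) hdmem
    simpa [hdA] using this
  omega
end

section
/- Let S = {s, n_1, …, n_d} be the source set returned by the separation algorithm on the balanced-tree flow graph for data point i (so n_1 = 1, n_{j+1} ∈ {2n_j, 2n_j+1}, and n_d is the leaf l(i) that point i is routed to). Then the cut-set C(S) consists exactly of: the arc (n_d, t), together with, for each j ∈ {1,…,d−1}, the single arc from n_j to its child not on the path. Consequently the Benders inequality generated is g_i ≤ w^{l(i)}_{y_i} + Σ_{n ∈ S∩B} Σ_{f: x^i_f ≠ x^i_{f(n)}} b_{nf}. -/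
/-- Arc capacities `c^i(b,w)` on child arcs for datapoint with features `x`:
the left arc `(n, 2n)` has capacity `∑_{f : x_f = 0} b_{nf}` and the right arc
`(n, 2n+1)` has capacity `∑_{f : x_f = 1} b_{nf}`. -/
def capChildR {F : Type*} [Fintype F] (x : F → Bool) (b : ℕ → F → ℝ) (n m : ℕ) : ℝ :=
  if m = 2 * n then ∑ f ∈ Finset.univ.filter (fun f => x f = false), b n f
  else ∑ f ∈ Finset.univ.filter (fun f => x f = true), b n f

/-- Capacity of the cut with source set `{s} ∪ A` in the flow graph of a balanced
decision tree of depth `d`; the source arc `(s,1)` has capacity 1 and the sink arc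
of leaf `n` has capacity `capT n`. -/
def cutCapR (d : ℕ) (capC : ℕ → ℕ → ℝ) (capT : ℕ → ℝ) (A : Finset ℕ) : ℝ :=
  (if 1 ∈ A then 0 else 1) +
  (∑ n ∈ Finset.Icc 1 (2 ^ d - 1),
    if n ∈ A then
      (if 2 * n ∈ A then 0 else capC n (2 * n)) +
      (if 2 * n + 1 ∈ A then 0 else capC n (2 * n + 1))
    else 0) +
  (∑ n ∈ Finset.Icc (2 ^ d) (2 ^ (d + 1) - 1), if n ∈ A then capT n else 0)

/-- Let `S = {s} ∪ {p 0, …, p d}` be the source set returned by the separation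
algorithm for datapoint `x` of class `y` (so `p 0 = 1`, each step follows the branching
test of the selected feature `fsel`, and `p d` is the leaf the point is routed to; `w n`
denotes `w^n_{y}`). Then the cut-set consists exactly of the sink arc of the leaf `p d`
together with, for each internal path node, the single arc to its child not on the path
(these off-path children are not in `S`), and consequently the generated Benders cut is
`g ≤ w^{l(i)}_{y} + ∑_{n ∈ S ∩ B} ∑_{f : x_f ≠ x_{f(n)}} b_{nf}`: the cut capacity
equals that right-hand side. -/
theorem benders_cut_from_path {F : Type*} [Fintype F] (x : F → Bool)
    (b : ℕ → F → ℝ) (w : ℕ → ℝ) (fsel : ℕ → F) (d : ℕ) (p : ℕ → ℕ)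
    (hp0 : p 0 = 1)
    (hstep : ∀ j < d,
      p (j + 1) = if x (fsel (p j)) = false then 2 * p j else 2 * p j + 1) :
    (∀ j < d,
      (if x (fsel (p j)) = false then 2 * p j + 1 else 2 * p j) ∉
        (Finset.range (d + 1)).image p) ∧
    cutCapR d (capChildR x b) w ((Finset.range (d + 1)).image p) =
      w (p d) +
        ∑ j ∈ Finset.range d,
          ∑ f ∈ Finset.univ.filter (fun f => x f ≠ x (fsel (p j))), b (p j) f := by
  set A := (Finset.range (d + 1)).image p with hA
  have hrange : ∀ j, j ≤ d → 2 ^ j ≤ p j ∧ p j < 2 ^ (j + 1) := by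
    intro j
    induction j with
    | zero => intro _; simp [hp0]
    | succ k ih =>
      intro hj
      have hk : k < d := hj
      obtain ⟨h1, h2⟩ := ih (Nat.le_of_lt hk)
      have hs := hstep k hk
      have e1 : (2:ℕ) ^ (k+1) = 2 * 2 ^ k := by ring
      have e2 : (2:ℕ) ^ (k+2) = 2 * 2 ^ (k+1) := by ring
      by_cases hx : x (fsel (p k)) = false
      · rw [if_pos hx] at hs; omega
      · rw [if_neg hx] at hs; omega
  have hmem : ∀ n, n ∈ A ↔ ∃ j, j ≤ d ∧ p j = n := by
    intro n
    simp [hA, Finset.mem_image, Nat.lt_succ_iff]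
  have hlevel : ∀ j k n, j ≤ d → k ≤ d → 2 ^ j ≤ n → n < 2 ^ (j+1) → p k = n → k = j := by
    intro j k n hj hk h1 h2 hpk
    obtain ⟨h3, h4⟩ := hrange k hk
    by_contra hne
    rcases Nat.lt_or_ge k j with h | h
    · have : (2:ℕ) ^ (k+1) ≤ 2 ^ j := Nat.pow_le_pow_right (by norm_num) h
      omega
    · have hj' : j < k := lt_of_le_of_ne h (Ne.symm hne)
      have : (2:ℕ) ^ (j+1) ≤ 2 ^ k := Nat.pow_le_pow_right (by norm_num) hj'
      omega
  have hoff : ∀ j, j < d →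
      (if x (fsel (p j)) = false then 2 * p j + 1 else 2 * p j) ∉ A := by
    intro j hj hc
    obtain ⟨k, hk, hpk⟩ := (hmem _).1 hc
    obtain ⟨h1, h2⟩ := hrange j (le_of_lt hj)
    have hs := hstep j hj
    have e1 : (2:ℕ) ^ (j+1) = 2 * 2 ^ j := by ring
    have e2 : (2:ℕ) ^ (j+2) = 2 * 2 ^ (j+1) := by ring
    by_cases hx : x (fsel (p j)) = false
    · rw [if_pos hx] at hpk hs
      have hk' : k = j + 1 := hlevel (j+1) k _ (by omega) hk (by omega) (by omega) hpk
      subst hk'; omega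
    · rw [if_neg hx] at hpk hs
      have hk' : k = j + 1 := hlevel (j+1) k _ (by omega) hk (by omega) (by omega) hpk
      subst hk'; omega
  refine ⟨hoff, ?_⟩
  have h1A : (1:ℕ) ∈ A := (hmem 1).2 ⟨0, Nat.zero_le _, hp0⟩
  have hpd := hrange d le_rfl
  have hone : (1:ℕ) ≤ 2 ^ d := Nat.one_le_two_pow
  -- third sum
  have hsum3 : (∑ n ∈ Finset.Icc (2 ^ d) (2 ^ (d + 1) - 1),
      if n ∈ A then w n else 0) = w (p d) := by
    rw [Finset.sum_eq_single_of_mem (p d)]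
    · rw [if_pos ((hmem _).2 ⟨d, le_rfl, rfl⟩)]
    · rw [Finset.mem_Icc]; omega
    · intro n hn hne
      rw [Finset.mem_Icc] at hn
      rw [if_neg]
      intro hnA
      obtain ⟨k, hk, hpk⟩ := (hmem _).1 hnA
      have : k = d := hlevel d k n le_rfl hk hn.1 (by omega) hpk
      subst this
      exact hne hpk.symm
  -- second sum
  have hinj : ∀ j ∈ Finset.range d, ∀ k ∈ Finset.range d, p j = p k → j = k := by
    intro j hj k hk hpk
    rw [Finset.mem_range] at hj hk
    obtain ⟨h1, h2⟩ := hrange j (le_of_lt hj)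
    exact (hlevel j k (p j) (le_of_lt hj) (le_of_lt hk) h1 h2 hpk.symm).symm
  have hsub : (Finset.range d).image p ⊆ Finset.Icc 1 (2 ^ d - 1) := by
    intro n hn
    obtain ⟨j, hj, hpj⟩ := Finset.mem_image.1 hn
    rw [Finset.mem_range] at hj
    obtain ⟨h1, h2⟩ := hrange j (le_of_lt hj)
    have h3 : (2:ℕ) ^ (j+1) ≤ 2 ^ d := Nat.pow_le_pow_right (by norm_num) hj
    have h4 : (1:ℕ) ≤ 2 ^ j := Nat.one_le_two_pow
    rw [Finset.mem_Icc]
    omega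
  have hsum2 : (∑ n ∈ Finset.Icc 1 (2 ^ d - 1),
      if n ∈ A then
        (if 2 * n ∈ A then 0 else capChildR x b n (2 * n)) +
        (if 2 * n + 1 ∈ A then 0 else capChildR x b n (2 * n + 1))
      else 0) =
      ∑ j ∈ Finset.range d,
        ∑ f ∈ Finset.univ.filter (fun f => x f ≠ x (fsel (p j))), b (p j) f := by
    rw [← Finset.sum_subset hsub]
    · rw [Finset.sum_image hinj]
      refine Finset.sum_congr rfl ?_
      intro j hj
      rw [Finset.mem_range] at hj
      have hpjA : p j ∈ A := (hmem _).2 ⟨j, le_of_lt hj, rfl⟩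
      have hs := hstep j hj
      have hof := hoff j hj
      rw [if_pos hpjA]
      by_cases hx : x (fsel (p j)) = false
      · rw [if_pos hx] at hs hof
        have hL : 2 * p j ∈ A := hs ▸ (hmem _).2 ⟨j+1, hj, rfl⟩
        rw [if_pos hL, if_neg hof, zero_add]
        unfold capChildR
        rw [if_neg (by omega)]
        refine Finset.sum_congr ?_ (fun _ _ => rfl)
        refine Finset.filter_congr ?_
        intro f _
        rw [hx]
        cases h : x f <;> simp
      · rw [if_neg hx] at hs hof
        have hR : 2 * p j + 1 ∈ A := hs ▸ (hmem _).2 ⟨j+1, hj, rfl⟩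
        rw [if_pos hR, if_neg hof, add_zero]
        unfold capChildR
        rw [if_pos rfl]
        have hx' : x (fsel (p j)) = true := by
          revert hx; cases x (fsel (p j)) <;> simp
        refine Finset.sum_congr ?_ (fun _ _ => rfl)
        refine Finset.filter_congr ?_
        intro f _
        rw [hx']
        cases h : x f <;> simp
    · intro n hn hnn
      rw [Finset.mem_Icc] at hn
      rw [if_neg]
      intro hnA
      obtain ⟨k, hk, hpk⟩ := (hmem _).1 hnA
      rcases Nat.lt_or_ge k d with h | h
      · exact hnn (Finset.mem_image.2 ⟨k, Finset.mem_range.2 h, hpk⟩)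
      · have : k = d := le_antisymm hk h
        subst this
        omega
  unfold cutCapR
  rw [if_pos h1A, hsum2, hsum3]
  ring
end

section
/- Consider integral (b, w) with Σ_f b_{nf} = 1 for all internal n and Σ_k w^n_k = 1 for all leaves n, in the balanced depth-d tree. For a data point i with binary features x^i and label y^i, the maximum s–t flow value g^i(b,w) in the capacitated flow graph G^i(b,w) equals 1 if the tree routed by (b) sends i to a leaf where w assigns class y^i, and 0 otherwise. In other words, the max-flow subproblem value equals the 0/1 indicator of correct classification of data point i by the decision tree (b,w). -/
/-- Capacity of child arcs in `G^i(b,w)` for datapoint features `x`: left arc `(n,2n)`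
has capacity `∑_{f : x_f = 0} b_{nf}`, right arc `(n,2n+1)` capacity `∑_{f : x_f = 1} b_{nf}`. -/
def capChildN {F : Type*} [Fintype F] (x : F → Bool) (b : ℕ → F → ℕ) (n m : ℕ) : ℕ :=
  if m = 2 * n then ∑ f ∈ Finset.univ.filter (fun f => x f = false), b n f
  else ∑ f ∈ Finset.univ.filter (fun f => x f = true), b n f

/-- Routing step of datapoint `x` through the tree branching according to `b`: go left
when the selected feature has value 0 (equivalently, when the left arc capacity is 1). -/
def nextNodeB {F : Type*} [Fintype F] (x : F → Bool) (b : ℕ → F → ℕ) (n : ℕ) : ℕ :=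
  if (∑ f ∈ Finset.univ.filter (fun f => x f = false), b n f) = 1 then 2 * n
  else 2 * n + 1

/-- Feasible flow in the capacitated flow graph of the balanced depth-`d` tree. -/
def FeasibleFlow (d : ℕ) (capChild : ℕ → ℕ → ℕ) (capSink : ℕ → ℕ)
    (zC : ℕ → ℕ → ℕ) (zT : ℕ → ℕ) (zS : ℕ) : Prop :=
  zS ≤ 1 ∧
  (∀ n, 1 ≤ n → n ≤ 2 ^ d - 1 →
    zC n (2 * n) ≤ capChild n (2 * n) ∧ zC n (2 * n + 1) ≤ capChild n (2 * n + 1) ∧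
    (if n = 1 then zS else zC (n / 2) n) = zC n (2 * n) + zC n (2 * n + 1)) ∧
  (∀ n, 2 ^ d ≤ n → n ≤ 2 ^ (d + 1) - 1 →
    zT n ≤ capSink n ∧ (if n = 1 then zS else zC (n / 2) n) = zT n)

/-- The node reached after `k` routing steps from the root. -/
def pathB {F : Type*} [Fintype F] (x : F → Bool) (b : ℕ → F → ℕ) (k : ℕ) : ℕ :=
  (nextNodeB x b)^[k] 1

section Aux
variable {F : Type*} [Fintype F] (x : F → Bool) (b : ℕ → F → ℕ)

lemma nextNodeB_cases (n : ℕ) :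
    nextNodeB x b n = 2 * n ∨ nextNodeB x b n = 2 * n + 1 := by
  unfold nextNodeB; split <;> simp

lemma pathB_zero : pathB x b 0 = 1 := rfl

lemma pathB_succ (k : ℕ) : pathB x b (k + 1) = nextNodeB x b (pathB x b k) :=
  Function.iterate_succ_apply' _ _ _

lemma pathB_bound (k : ℕ) : 2 ^ k ≤ pathB x b k ∧ pathB x b k < 2 ^ (k + 1) := by
  induction k with
  | zero => simp [pathB]
  | succ k ih =>
    have h1 : (2:ℕ) ^ (k + 1) = 2 * 2 ^ k := by ring
    have h2 : (2:ℕ) ^ (k + 1 + 1) = 2 * 2 ^ (k + 1) := by ring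
    rw [pathB_succ]
    rcases nextNodeB_cases x b (pathB x b k) with h | h <;> rw [h] <;> omega

lemma pathB_succ_div (k : ℕ) : pathB x b (k + 1) / 2 = pathB x b k := by
  rw [pathB_succ]
  rcases nextNodeB_cases x b (pathB x b k) with h | h <;> rw [h] <;> omega

lemma capChildN_left (n : ℕ) :
    capChildN x b n (2 * n) = ∑ f ∈ Finset.univ.filter (fun f => x f = false), b n f := by
  simp [capChildN]

lemma capChildN_right (n : ℕ) :
    capChildN x b n (2 * n + 1) = ∑ f ∈ Finset.univ.filter (fun f => x f = true), b n f := by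
  rw [capChildN, if_neg (by omega)]

lemma cap_split (n : ℕ) :
    capChildN x b n (2 * n) + capChildN x b n (2 * n + 1) = ∑ f : F, b n f := by
  rw [capChildN_left, capChildN_right]
  have h := Finset.sum_filter_add_sum_filter_not Finset.univ (fun f => x f = false) (b n)
  simpa using h

end Aux

/-- For integral `(b,w)` with one branching feature per internal node and one predicted
class per leaf, the maximum `s`–`t` flow value `g^i(b,w)` in `G^i(b,w)` equals 1 if the
decision tree routes datapoint `i` (features `x`, label `y`) to a leaf predicting class
`y`, and 0 otherwise: the max-flow subproblem value is the 0/1 indicator of correct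
classification. -/
theorem maxflow_eq_correct_classification {F K : Type*} [Fintype F] [Fintype K]
    (d : ℕ) (x : F → Bool) (y : K) (b : ℕ → F → ℕ) (w : ℕ → K → ℕ)
    (hb01 : ∀ n f, b n f ≤ 1)
    (hbsum : ∀ n, 1 ≤ n → n ≤ 2 ^ d - 1 → ∑ f : F, b n f = 1)
    (hw01 : ∀ n k, w n k ≤ 1)
    (hwsum : ∀ n, 2 ^ d ≤ n → n ≤ 2 ^ (d + 1) - 1 → ∑ k : K, w n k = 1) :
    IsGreatest
      {v | ∃ zC zT, FeasibleFlow d (capChildN x b) (fun n => w n y) zC zT v}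
      (if w ((nextNodeB x b)^[d] 1) y = 1 then 1 else 0) := by
  classical
  have hPd : (nextNodeB x b)^[d] 1 = pathB x b d := rfl
  rw [hPd]
  -- structure of internal nodes
  have hnode : ∀ n, 1 ≤ n → n ≤ 2 ^ d - 1 →
      (nextNodeB x b n = 2 * n ∧ capChildN x b n (2 * n) = 1 ∧
        capChildN x b n (2 * n + 1) = 0) ∨
      (nextNodeB x b n = 2 * n + 1 ∧ capChildN x b n (2 * n) = 0 ∧
        capChildN x b n (2 * n + 1) = 1) := by
    intro n h1 h2
    have hcl := capChildN_left x b n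
    have hcr := capChildN_right x b n
    have hsplit : capChildN x b n (2 * n) + capChildN x b n (2 * n + 1) = 1 := by
      rw [cap_split]; exact hbsum n h1 h2
    by_cases h : (∑ f ∈ Finset.univ.filter (fun f => x f = false), b n f) = 1
    · left; exact ⟨by unfold nextNodeB; rw [if_pos h], by omega, by omega⟩
    · right; exact ⟨by unfold nextNodeB; rw [if_neg h], by omega, by omega⟩
  -- bounds on path nodes up to depth d
  have hpb : ∀ k, 2 ^ k ≤ pathB x b k ∧ pathB x b k < 2 ^ (k + 1) := pathB_bound x b
  have hint : ∀ k, k < d → 1 ≤ pathB x b k ∧ pathB x b k ≤ 2 ^ d - 1 := by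
    intro k hk
    have h1 := hpb k
    have h2 : (2:ℕ) ^ (k + 1) ≤ 2 ^ d := Nat.pow_le_pow_right (by norm_num) (by omega)
    have h3 : (1:ℕ) ≤ 2 ^ k := Nat.one_le_two_pow
    omega
  have hleafL : 2 ^ d ≤ pathB x b d ∧ pathB x b d ≤ 2 ^ (d + 1) - 1 := by
    have := hpb d; omega
  constructor
  · -- membership : construct a flow of the indicated value
    by_cases hcor : w (pathB x b d) y = 1
    · rw [if_pos hcor]
      refine ⟨fun n m => if (∃ k, k < d ∧ pathB x b k = n ∧ pathB x b (k + 1) = m) then 1 else 0,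
          fun n => if n = pathB x b d then 1 else 0, le_refl 1, ?_, ?_⟩
      · -- internal nodes
        intro n h1 h2
        dsimp only
        have hchar : ∀ m, (∃ k, k < d ∧ pathB x b k = n ∧ pathB x b (k + 1) = m)
            ↔ ((∃ k, k < d ∧ pathB x b k = n) ∧ m = nextNodeB x b n) := by
          intro m
          constructor
          · rintro ⟨k, hk, rfl, rfl⟩
            exact ⟨⟨k, hk, rfl⟩, pathB_succ x b k⟩
          · rintro ⟨⟨k, hk, rfl⟩, rfl⟩
            exact ⟨k, hk, rfl, pathB_succ x b k⟩
        refine ⟨?_, ?_, ?_⟩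
        · split
          · rename_i h
            rw [hchar] at h
            rcases hnode n h1 h2 with ⟨hn, hc, _⟩ | ⟨hn, _, _⟩
            · omega
            · exfalso; have := h.2.trans hn; omega
          · exact Nat.zero_le _
        · split
          · rename_i h
            rw [hchar] at h
            rcases hnode n h1 h2 with ⟨hn, _, _⟩ | ⟨hn, _, hc⟩
            · exfalso; have := h.2.trans hn; omega
            · omega
          · exact Nat.zero_le _
        · -- conservation
          simp only [hchar]
          have hQout : ((if ((∃ k, k < d ∧ pathB x b k = n) ∧ 2 * n = nextNodeB x b n)
              then 1 else 0) + (if ((∃ k, k < d ∧ pathB x b k = n) ∧ 2 * n + 1 = nextNodeB x b n)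
              then 1 else 0) : ℕ) = if (∃ k, k < d ∧ pathB x b k = n) then 1 else 0 := by
            rcases nextNodeB_cases x b n with h | h <;> rw [h] <;>
              by_cases hq : (∃ k, k < d ∧ pathB x b k = n) <;>
                simp [hq] <;> omega
          rw [hQout]
          by_cases hn1 : n = 1
          · subst hn1
            rw [if_pos rfl, if_pos ?_]
            have hd : 1 ≤ d := by
              rcases Nat.eq_zero_or_pos d with h | h
              · subst h; simp at h2
              · exact h
            exact ⟨0, hd, rfl⟩
          · rw [if_neg hn1]
            have hiff : (∃ k, k < d ∧ pathB x b k = n / 2 ∧ pathB x b (k + 1) = n)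
                ↔ (∃ k, k < d ∧ pathB x b k = n) := by
              constructor
              · rintro ⟨k, hk, -, rfl⟩
                refine ⟨k + 1, ?_, rfl⟩
                have hbk := hpb (k + 1)
                have hlt : (2:ℕ) ^ (k + 1) < 2 ^ d := by omega
                exact (Nat.pow_lt_pow_iff_right (by norm_num)).mp hlt
              · rintro ⟨k, hk, rfl⟩
                have hk0 : k ≠ 0 := by
                  intro h; subst h; exact hn1 rfl
                obtain ⟨j, rfl⟩ : ∃ j, k = j + 1 := ⟨k - 1, by omega⟩
                exact ⟨j, by omega, (pathB_succ_div x b j).symm, rfl⟩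
            by_cases hq : (∃ k, k < d ∧ pathB x b k = n)
            · rw [if_pos hq, if_pos (hiff.mpr hq)]
            · rw [if_neg hq, if_neg (fun h => hq (hiff.mp h))]
      · -- leaves
        intro n h1 h2
        dsimp only
        constructor
        · split
          · rename_i h; rw [h, hcor]
          · exact Nat.zero_le _
        · by_cases hn1 : n = 1
          · subst hn1
            have hd0 : d = 0 := by
              by_contra hd0
              have : (2:ℕ) ^ 1 ≤ 2 ^ d := Nat.pow_le_pow_right (by norm_num) (by omega)
              omega
            subst hd0
            simp [pathB]
          · rw [if_neg hn1]
            have hiffL : (∃ k, k < d ∧ pathB x b k = n / 2 ∧ pathB x b (k + 1) = n)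
                ↔ n = pathB x b d := by
              constructor
              · rintro ⟨k, hk, -, rfl⟩
                have hb1 := hpb (k + 1)
                have hkd : k + 1 = d := by
                  by_contra hne
                  have hlt : k + 1 < d := by omega
                  have : (2:ℕ) ^ (k + 1 + 1) ≤ 2 ^ d :=
                    Nat.pow_le_pow_right (by norm_num) (by omega)
                  omega
                rw [hkd]
              · rintro rfl
                have hd0 : d ≠ 0 := by
                  intro h; subst h; exact hn1 rfl
                obtain ⟨j, rfl⟩ : ∃ j, d = j + 1 := ⟨d - 1, by omega⟩
                exact ⟨j, by omega, (pathB_succ_div x b j).symm, rfl⟩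
            by_cases hq : n = pathB x b d
            · rw [if_pos (hiffL.mpr hq), if_pos hq]
            · rw [if_neg (fun h => hq (hiffL.mp h)), if_neg hq]
    · -- misclassified : the zero flow
      rw [if_neg hcor]
      refine ⟨fun _ _ => 0, fun _ => 0, Nat.zero_le _, ?_, ?_⟩
      · intro n _ _
        refine ⟨Nat.zero_le _, Nat.zero_le _, ?_⟩
        split <;> rfl
      · intro n _ _
        refine ⟨Nat.zero_le _, ?_⟩
        split <;> rfl
  · -- upper bound
    rintro v ⟨zC, zT, hS, hInt, hLeaf⟩
    by_cases hcor : w (pathB x b d) y = 1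
    · rw [if_pos hcor]; exact hS
    · rw [if_neg hcor]
      have key : ∀ k, k ≤ d →
          v ≤ (if pathB x b k = 1 then v else zC (pathB x b k / 2) (pathB x b k)) := by
        intro k
        induction k with
        | zero => intro _; rw [if_pos (pathB_zero x b)]
        | succ k ih =>
          intro hk
          have ihv := ih (by omega)
          obtain ⟨hn1, hn2⟩ := hint k (by omega)
          obtain ⟨hc1, hc2, hcons⟩ := hInt (pathB x b k) hn1 hn2
          have hne1 : pathB x b (k + 1) ≠ 1 := by
            have := hpb (k + 1)
            have : (2:ℕ) ≤ 2 ^ (k + 1) := Nat.one_lt_two_pow_iff.mpr (by omega)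
            omega
          rw [if_neg hne1, pathB_succ_div, pathB_succ]
          rcases hnode (pathB x b k) hn1 hn2 with ⟨hn, _, hc0⟩ | ⟨hn, hc0, _⟩ <;>
            rw [hn] <;> omega
      have hv := key d le_rfl
      obtain ⟨hzt, hcons⟩ := hLeaf (pathB x b d) hleafL.1 hleafL.2
      have hw0 : w (pathB x b d) y = 0 := by
        have := hw01 (pathB x b d) y; omega
      rw [hcons] at hv
      simp only [hw0] at hzt
      omega
end

section
/- In the flow conservation system of the flow-based formulation: if z ∈ {0,1}^A satisfies z_{a(n),n} = z_{n,ℓ(n)} + z_{n,r(n)} for all internal n, z_{a(n),n} = z_{n,t} for all leaves n, and z_{s,1} ≤ 1, then the support of z is either empty or forms a single directed path from s to t passing through exactly one leaf; in particular Σ_{n ∈ L} z_{n,t} = z_{s,1} ∈ {0,1}. -/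
/-!
Write `f n` for the flow on the arc entering node `n` (the arc `(s, 1)` for the root). At an
internal node `n` conservation reads `f n = f (2n) + f (2n + 1)`, and the children of the nodes of
depth `j` are exactly the nodes of depth `j + 1`; hence every level `2^j ≤ n < 2^(j+1)` of the tree
carries the total flow `f 1 = z_{s,1}`. If this is `0`, every flow vanishes. If it is `1`, each
level holds exactly one node with inflow `1`; greedily descending from the root to a child with
inflow `1` finds these nodes, and they form the path.
-/

open Finset

theorem Finset.sum_Ico_two_mul {M : Type*} [AddCommMonoid M] (g : ℕ → M) {a b : ℕ} (h : a ≤ b) :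
    ∑ m ∈ Ico (2 * a) (2 * b), g m = ∑ n ∈ Ico a b, (g (2 * n) + g (2 * n + 1)) := by
  induction b, h using Nat.le_induction with
  | base => simp
  | succ b hab ih =>
    rw [sum_Ico_succ_top hab, ← ih, show 2 * (b + 1) = 2 * b + 1 + 1 by ring,
      sum_Ico_succ_top (by omega), sum_Ico_succ_top (by omega), add_assoc]

theorem Finset.eq_of_sum_le_one {ι : Type*} {s : Finset ι} {g : ι → ℕ} (hs : ∑ i ∈ s, g i ≤ 1)
    {a b : ι} (ha : a ∈ s) (hb : b ∈ s) (hga : g a = 1) (hgb : g b = 1) : a = b := by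
  by_contra hne
  have := add_le_sum (fun i _ ↦ Nat.zero_le (g i)) ha hb hne
  omega

namespace HeapTree

def level (j : ℕ) : Finset ℕ := Ico (2 ^ j) (2 ^ (j + 1))

lemma mem_level {j n : ℕ} : n ∈ level j ↔ 2 ^ j ≤ n ∧ n < 2 ^ (j + 1) := mem_Ico

lemma level_zero : level 0 = {1} := rfl

lemma one_le_of_mem_level {j n : ℕ} (hn : n ∈ level j) : 1 ≤ n :=
  (Nat.one_le_two_pow).trans (mem_level.1 hn).1

lemma exists_mem_level {n d : ℕ} (hn : 1 ≤ n) (h : n < 2 ^ d) : ∃ j < d, n ∈ level j :=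
  ⟨Nat.log 2 n, (Nat.log_lt_iff_lt_pow one_lt_two (by omega)).2 h,
    mem_level.2 ⟨Nat.pow_log_le_self 2 (by omega), Nat.lt_pow_succ_log_self one_lt_two n⟩⟩

lemma sum_level_succ {M : Type*} [AddCommMonoid M] (g : ℕ → M) (j : ℕ) :
    ∑ m ∈ level (j + 1), g m = ∑ n ∈ level j, (g (2 * n) + g (2 * n + 1)) := by
  simpa only [level, ← pow_succ'] using sum_Ico_two_mul g (Nat.pow_le_pow_right two_pos j.le_succ)

lemma child_mem_level {j n m : ℕ} (hn : n ∈ level j) (hm : m = 2 * n ∨ m = 2 * n + 1) :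
    m ∈ level (j + 1) := by
  rw [mem_level, pow_succ] at *
  omega

def descent (f : ℕ → ℕ) : ℕ → ℕ
  | 0 => 1
  | j + 1 => if f (2 * descent f j) = 1 then 2 * descent f j else 2 * descent f j + 1

lemma descent_succ (f : ℕ → ℕ) (j : ℕ) :
    descent f (j + 1) = 2 * descent f j ∨ descent f (j + 1) = 2 * descent f j + 1 := by
  rw [descent]
  split_ifs <;> simp

lemma descent_succ_div_two (f : ℕ → ℕ) (j : ℕ) : descent f (j + 1) / 2 = descent f j := by
  have := descent_succ f j
  omega

lemma descent_mem_level (f : ℕ → ℕ) (j : ℕ) : descent f j ∈ level j := by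
  induction j with
  | zero => simp [descent, level_zero]
  | succ j ih => exact child_mem_level ih (descent_succ f j)

section Flow

variable {f : ℕ → ℕ} {d : ℕ}
  (hcons : ∀ n, 1 ≤ n → n < 2 ^ d → f n = f (2 * n) + f (2 * n + 1))
include hcons

lemma sum_level_eq_root {j : ℕ} (hj : j ≤ d) : ∑ n ∈ level j, f n = f 1 := by
  induction j with
  | zero => simp [level_zero]
  | succ j ih =>
    rw [sum_level_succ, ← ih (by omega)]
    refine sum_congr rfl fun n hn ↦ (hcons n ?_ ?_).symm <;>
    · rw [mem_level] at hn
      have := Nat.pow_le_pow_right two_pos (show j + 1 ≤ d by omega)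
      omega

lemma eq_zero_of_mem_level (h0 : f 1 = 0) {j m : ℕ} (hj : j ≤ d) (hm : m ∈ level j) :
    f m = 0 :=
  sum_eq_zero_iff.1 (by rw [sum_level_eq_root hcons hj, h0]) m hm

lemma descent_eq_one (h1 : f 1 = 1) {j : ℕ} (hj : j ≤ d) : f (descent f j) = 1 := by
  induction j with
  | zero => exact h1
  | succ j ih =>
    have hp := mem_level.1 (descent_mem_level f j)
    have hd := Nat.pow_le_pow_right two_pos (show j + 1 ≤ d by omega)
    have hsplit := hcons (descent f j) (by omega) (by omega)
    rw [ih (by omega)] at hsplit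
    rw [descent]
    split_ifs with hleft
    · exact hleft
    · omega

lemma eq_descent (h1 : f 1 = 1) {j m : ℕ} (hj : j ≤ d) (hm : m ∈ level j) (hfm : f m = 1) :
    m = descent f j :=
  eq_of_sum_le_one (sum_level_eq_root hcons hj ▸ h1.le) hm (descent_mem_level f j) hfm
    (descent_eq_one hcons h1 hj)

lemma descent_eq_of_child (h1 : f 1 = 1) {j n m : ℕ} (hj : j < d) (hn : n ∈ level j)
    (hm : m = 2 * n ∨ m = 2 * n + 1) (hfm : f m = 1) :
    descent f j = n ∧ descent f (j + 1) = m := by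
  have hm_eq := eq_descent hcons h1 hj (child_mem_level hn hm) hfm
  refine ⟨?_, hm_eq.symm⟩
  rw [← descent_succ_div_two, ← hm_eq]
  omega

end Flow

/-- `z_{a(n),n}`, with `a(1) = s`. -/
def inflow (zS : ℕ) (zC : ℕ → ℕ → ℕ) (n : ℕ) : ℕ := if n = 1 then zS else zC (n / 2) n

lemma inflow_one (zS : ℕ) (zC : ℕ → ℕ → ℕ) : inflow zS zC 1 = zS := if_pos rfl

lemma inflow_child {zS : ℕ} {zC : ℕ → ℕ → ℕ} {n m : ℕ} (hn : 1 ≤ n)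
    (hm : m = 2 * n ∨ m = 2 * n + 1) : inflow zS zC m = zC n m := by
  rw [inflow, if_neg (by omega), show m / 2 = n by omega]

end HeapTree

open HeapTree

theorem conservation_support_is_path_general (d : ℕ) (zC : ℕ → ℕ → ℕ) (zT : ℕ → ℕ) (zS : ℕ)
    (hzS : zS ≤ 1)
    (hcons : ∀ n, 1 ≤ n → n ≤ 2 ^ d - 1 →
      (if n = 1 then zS else zC (n / 2) n) = zC n (2 * n) + zC n (2 * n + 1))
    (hleaf : ∀ n, 2 ^ d ≤ n → n ≤ 2 ^ (d + 1) - 1 →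
      (if n = 1 then zS else zC (n / 2) n) = zT n) :
    (∑ n ∈ Finset.Icc (2 ^ d) (2 ^ (d + 1) - 1), zT n) = zS ∧ zS ≤ 1 ∧
    (zS = 0 →
      (∀ n, 1 ≤ n → n ≤ 2 ^ d - 1 → zC n (2 * n) = 0 ∧ zC n (2 * n + 1) = 0) ∧
      (∀ n, 2 ^ d ≤ n → n ≤ 2 ^ (d + 1) - 1 → zT n = 0)) ∧
    (zS = 1 → ∃ p : ℕ → ℕ, p 0 = 1 ∧
      (∀ j < d, (p (j + 1) = 2 * p j ∨ p (j + 1) = 2 * p j + 1) ∧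
        zC (p j) (p (j + 1)) = 1) ∧
      zT (p d) = 1 ∧
      (∀ n, 1 ≤ n → n ≤ 2 ^ d - 1 → ∀ m, (m = 2 * n ∨ m = 2 * n + 1) →
        zC n m = 1 → ∃ j < d, p j = n ∧ p (j + 1) = m) ∧
      (∀ n, 2 ^ d ≤ n → n ≤ 2 ^ (d + 1) - 1 → zT n = 1 → n = p d)) := by
  have hpos : 1 ≤ 2 ^ d := Nat.one_le_two_pow
  have hsucc : 2 ^ (d + 1) = 2 ^ d * 2 := pow_succ 2 d
  set f := inflow zS zC
  have hroot : f 1 = zS := inflow_one zS zC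
  have hchild : ∀ {n m}, 1 ≤ n → (m = 2 * n ∨ m = 2 * n + 1) → f m = zC n m := inflow_child
  have hflow : ∀ n, 1 ≤ n → n < 2 ^ d → f n = f (2 * n) + f (2 * n + 1) := fun n h1 h2 ↦ by
    rw [hchild h1 (.inl rfl), hchild h1 (.inr rfl)]
    exact hcons n h1 (by omega)
  have hleaves : ∀ n ∈ level d, zT n = f n := fun n hn ↦
    have := mem_level.1 hn
    (hleaf n this.1 (by omega)).symm
  have hIcc : Icc (2 ^ d) (2 ^ (d + 1) - 1) = level d := by
    ext n
    simp only [mem_Icc, mem_level]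
    omega
  refine ⟨?_, hzS, fun h0 ↦ ⟨fun n h1 h2 ↦ ?_, fun n h1 h2 ↦ ?_⟩, fun h1 ↦ ?_⟩
  · rw [hIcc, sum_congr rfl hleaves, sum_level_eq_root hflow le_rfl, hroot]
  · obtain ⟨j, hj, hn⟩ := exists_mem_level h1 (by omega : n < 2 ^ d)
    rw [← hchild h1 (.inl rfl), ← hchild h1 (.inr rfl)]
    exact ⟨eq_zero_of_mem_level hflow (hroot.trans h0) hj (child_mem_level hn (.inl rfl)),
      eq_zero_of_mem_level hflow (hroot.trans h0) hj (child_mem_level hn (.inr rfl))⟩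
  · rw [hleaves n (mem_level.2 ⟨h1, by omega⟩)]
    exact eq_zero_of_mem_level hflow (hroot.trans h0) le_rfl (mem_level.2 ⟨h1, by omega⟩)
  · have h1 : f 1 = 1 := hroot.trans h1
    refine ⟨descent f, rfl, fun j hj ↦ ⟨descent_succ f j, ?_⟩, ?_, ?_, ?_⟩
    · rw [← hchild (one_le_of_mem_level (descent_mem_level f j)) (descent_succ f j)]
      exact descent_eq_one hflow h1 hj
    · rw [hleaves _ (descent_mem_level f d)]
      exact descent_eq_one hflow h1 le_rfl
    · intro n hn1 hn2 m hm hzm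
      obtain ⟨j, hj, hn⟩ := exists_mem_level hn1 (by omega : n < 2 ^ d)
      exact ⟨j, hj, descent_eq_of_child hflow h1 hj hn hm (by rwa [hchild hn1 hm])⟩
    · intro n hn1 hn2 hzn
      have hn : n ∈ level d := mem_level.2 ⟨hn1, by omega⟩
      exact eq_descent hflow h1 le_rfl hn (by rwa [← hleaves n hn])

/-- If `z ∈ {0,1}^A` satisfies the flow conservation constraints of the flow-based
formulation on the balanced depth-`d` tree (`z_{a(n),n} = z_{n,ℓ(n)} + z_{n,r(n)}` at
internal nodes, `z_{a(n),n} = z_{n,t}` at leaves, `z_{s,1} ≤ 1`), then the support of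
`z` is either empty or a single directed `s`–`t` path through exactly one leaf; in
particular `∑_{n ∈ L} z_{n,t} = z_{s,1} ∈ {0,1}`. -/
theorem conservation_support_is_path (d : ℕ) (zC : ℕ → ℕ → ℕ) (zT : ℕ → ℕ) (zS : ℕ)
    (hzC : ∀ n m, zC n m ≤ 1) (hzT : ∀ n, zT n ≤ 1) (hzS : zS ≤ 1)
    (hcons : ∀ n, 1 ≤ n → n ≤ 2 ^ d - 1 →
      (if n = 1 then zS else zC (n / 2) n) = zC n (2 * n) + zC n (2 * n + 1))
    (hleaf : ∀ n, 2 ^ d ≤ n → n ≤ 2 ^ (d + 1) - 1 →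
      (if n = 1 then zS else zC (n / 2) n) = zT n) :
    (∑ n ∈ Finset.Icc (2 ^ d) (2 ^ (d + 1) - 1), zT n) = zS ∧ zS ≤ 1 ∧
    (zS = 0 →
      (∀ n, 1 ≤ n → n ≤ 2 ^ d - 1 → zC n (2 * n) = 0 ∧ zC n (2 * n + 1) = 0) ∧
      (∀ n, 2 ^ d ≤ n → n ≤ 2 ^ (d + 1) - 1 → zT n = 0)) ∧
    (zS = 1 → ∃ p : ℕ → ℕ, p 0 = 1 ∧
      (∀ j < d, (p (j + 1) = 2 * p j ∨ p (j + 1) = 2 * p j + 1) ∧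
        zC (p j) (p (j + 1)) = 1) ∧
      zT (p d) = 1 ∧
      (∀ n, 1 ≤ n → n ≤ 2 ^ d - 1 → ∀ m, (m = 2 * n ∨ m = 2 * n + 1) →
        zC n m = 1 → ∃ j < d, p j = n ∧ p (j + 1) = m) ∧
      (∀ n, 2 ^ d ≤ n → n ≤ 2 ^ (d + 1) - 1 → zT n = 1 → n = p d)) :=
  conservation_support_is_path_general d zC zT zS hzS hcons hleaf
end
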